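/- Let φ₁, φ₂ : [0,∞) → [0,∞) be continuous strictly increasing with φᵢ(0)=0, φᵢ(1)=1, α, β > 0 with α+β ≥ 1, and suppose F₁(t)=φ₁(t^{-1/n}) and F₂(t)=φ₂(t^{-1/n}) are both convex. Let K, L be star bodies in ℝⁿ and K +̃_φ L the star body with radial function ρ satisfying α φ₁(ρ(u)/ρ_K(u)) + β φ₂(ρ(u)/ρ_L(u)) = 1 for all u ∈ S^{n-1}. Then α φ₁((|K +̃_φ L|/|K|)^{1/n}) + β φ₂((|K +̃_φ L|/|L|)^{1/n}) ≤ 1. -/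

import Mathlib

/-- The class `Φ̃₂`: continuous on `[0,∞)²`, strictly increasing in each variable,
with `φ(0,0) = 0` and `φ(1,0) = φ(0,1) = 1`. -/
def IsPhi2 (φ : ℝ → ℝ → ℝ) : Prop :=
  ContinuousOn (fun p : ℝ × ℝ => φ p.1 p.2) (Set.Ici 0 ×ˢ Set.Ici 0) ∧
  (∀ y : ℝ, 0 ≤ y → StrictMonoOn (fun x => φ x y) (Set.Ici 0)) ∧
  (∀ x : ℝ, 0 ≤ x → StrictMonoOn (fun y => φ x y) (Set.Ici 0)) ∧
  φ 0 0 = 0 ∧ φ 1 0 = 1 ∧ φ 0 1 = 1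

noncomputable section

open Metric Set MeasureTheory Filter

/-- A star body about the origin in `ℝⁿ`, represented by its radial function,
which is continuous and positive on the unit sphere. -/
structure StarBody (n : ℕ) where
  ρ : EuclideanSpace ℝ (Fin n) → ℝ
  pos : ∀ u : EuclideanSpace ℝ (Fin n), ‖u‖ = 1 → 0 < ρ u
  cont : ContinuousOn ρ (sphere (0 : EuclideanSpace ℝ (Fin n)) 1)

/-- `M` is the Orlicz `φ`-radial addition `K +̃_φ L`, i.e.
`φ(ρ_M(u)/ρ_K(u), ρ_M(u)/ρ_L(u)) = 1` for all `u` on the unit sphere. -/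
def IsOrliczSum {n : ℕ} (φ : ℝ → ℝ → ℝ) (K L M : StarBody n) : Prop :=
  ∀ u : EuclideanSpace ℝ (Fin n), ‖u‖ = 1 →
    φ (M.ρ u / K.ρ u) (M.ρ u / L.ρ u) = 1

/-- The spherical Lebesgue measure on the unit sphere `S^{n-1}`. -/
def sphereMeasure (n : ℕ) : Measure (sphere (0 : EuclideanSpace ℝ (Fin n)) 1) :=
  (volume : Measure (EuclideanSpace ℝ (Fin n))).toSphere

/-- The volume of a star body via the polar coordinate formula
`|K| = (1/n) ∫_{S^{n-1}} ρ_K(u)ⁿ dσ(u)`. -/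
def StarBody.vol {n : ℕ} (K : StarBody n) : ℝ :=
  (1 / (n : ℝ)) * ∫ u : sphere (0 : EuclideanSpace ℝ (Fin n)) 1,
    (K.ρ u) ^ n ∂(sphereMeasure n)

/-- The class `Φ̃₁`: continuous strictly increasing on `[0,∞)` with
`φ(0) = 0` and `φ(1) = 1`. -/
def IsPhi1 (φ : ℝ → ℝ) : Prop :=
  ContinuousOn φ (Set.Ici 0) ∧ StrictMonoOn φ (Set.Ici 0) ∧ φ 0 = 0 ∧ φ 1 = 1

/-! Weighting the sphere by `ρ_Mⁿ`, Jensen's inequality for the convex `F(t) = φ(t^{-1/n})`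
applied to `(ρ_B/ρ_M)ⁿ` gives the dual Orlicz–Minkowski inequality
`|M| φ((|M|/|B|)^{1/n}) ≤ Ṽ_φ(M, B) := (1/n) ∫ ρ_Mⁿ φ(ρ_M/ρ_B) dσ`.
Integrating the defining equation of `M` against `ρ_Mⁿ` gives
`α Ṽ_{φ₁}(M, K) + β Ṽ_{φ₂}(M, L) = |M|`, and the two combine to the claim. -/

section WeightedJensen

variable {X : Type*} [MeasurableSpace X] {σ : Measure X}

lemma integral_withDensity_ofReal_eq {w : X → ℝ} (hw : Measurable w) (hw_nonneg : ∀ x, 0 ≤ w x)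
    (h : X → ℝ) :
    ∫ x, h x ∂σ.withDensity (fun x => ENNReal.ofReal (w x)) = ∫ x, w x * h x ∂σ := by
  rw [integral_withDensity_eq_integral_toReal_smul (by fun_prop)
    (.of_forall fun _ => ENNReal.ofReal_lt_top)]
  simp only [ENNReal.toReal_ofReal (hw_nonneg _), smul_eq_mul]

variable [TopologicalSpace X] [CompactSpace X] [BorelSpace X] [IsFiniteMeasure σ]

lemma Continuous.integrable_of_compactSpace {f : X → ℝ} (hf : Continuous f) :
    Integrable f σ :=
  hf.integrable_of_hasCompactSupport (.of_compactSpace f)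

lemma integral_pos_of_continuous_of_pos (hσ : σ ≠ 0) {w : X → ℝ} (hw : Continuous w)
    (hw_pos : ∀ x, 0 < w x) : 0 < ∫ x, w x ∂σ := by
  have hsupp : Function.support w = univ := eq_univ_of_forall fun x => (hw_pos x).ne'
  rw [integral_pos_iff_support_of_nonneg (fun x => (hw_pos x).le) hw.integrable_of_compactSpace,
    hsupp]
  exact Measure.measure_univ_pos.mpr hσ

theorem ConvexOn.map_weighted_integral_le {s : Set ℝ} {g : ℝ → ℝ} (hs : IsOpen s)
    (hg : ConvexOn ℝ s g) (hσ : σ ≠ 0) {w f : X → ℝ} (hw : Continuous w)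
    (hw_pos : ∀ x, 0 < w x) (hf : Continuous f) (hfs : ∀ x, f x ∈ s) :
    g ((∫ x, w x * f x ∂σ) / ∫ x, w x ∂σ) ≤ (∫ x, w x * g (f x) ∂σ) / ∫ x, w x ∂σ := by
  set μ := σ.withDensity (fun x => ENNReal.ofReal (w x))
  have hμ : ∀ h : X → ℝ, ∫ x, h x ∂μ = ∫ x, w x * h x ∂σ :=
    integral_withDensity_ofReal_eq hw.measurable fun x => (hw_pos x).le
  have hμ_univ : μ.real univ = ∫ x, w x ∂σ := by simpa using hμ fun _ => 1
  have : IsFiniteMeasure μ :=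
    isFiniteMeasure_withDensity_ofReal hw.integrable_of_compactSpace.hasFiniteIntegral
  have : NeZero μ := ⟨fun h0 => (integral_pos_of_continuous_of_pos hσ hw hw_pos).ne' <| by
    rw [← hμ_univ, h0, measureReal_zero_apply]⟩
  have : Nonempty X := μ.nonempty_of_neZero
  -- On the compact range of `f` Jensen only needs `g` on a closed interval inside `s`.
  obtain ⟨a, ha⟩ := (isCompact_range hf).exists_isLeast (range_nonempty f)
  obtain ⟨b, hb⟩ := (isCompact_range hf).exists_isGreatest (range_nonempty f)
  have hab : Icc a b ⊆ s := hg.1.ordConnected.out (range_subset_iff.mpr hfs ha.1)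
    (range_subset_iff.mpr hfs hb.1)
  have hgc : Continuous (g ∘ f) := (hg.continuousOn hs).comp_continuous hf hfs
  have := (hg.subset hab (convex_Icc a b)).map_average_le (μ := μ) ((hg.continuousOn hs).mono hab)
    isClosed_Icc (.of_forall fun x => ⟨ha.2 (mem_range_self x), hb.2 (mem_range_self x)⟩)
    hf.integrable_of_compactSpace hgc.integrable_of_compactSpace
  simpa only [average_eq, hμ_univ, hμ, smul_eq_mul, inv_mul_eq_div] using this

end WeightedJensen

lemma Real.pow_rpow_neg_one_div_natCast {x : ℝ} (hx : 0 ≤ x) {n : ℕ} (hn : n ≠ 0) :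
    (x ^ n) ^ (-(1 : ℝ) / n) = x⁻¹ := by
  rw [neg_div, Real.rpow_neg (pow_nonneg hx n), one_div, Real.pow_rpow_inv_natCast hx hn]

instance (n : ℕ) : IsFiniteMeasure (sphereMeasure n) :=
  inferInstanceAs (IsFiniteMeasure (volume : Measure (EuclideanSpace ℝ (Fin n))).toSphere)

lemma sphereMeasure_ne_zero {n : ℕ} (hn : n ≠ 0) : sphereMeasure n ≠ 0 := by
  rwa [sphereMeasure, Ne, Measure.toSphere_eq_zero_iff_finrank, finrank_euclideanSpace_fin]

namespace StarBody

variable {n : ℕ}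

lemma continuous_ρ_sphere (K : StarBody n) :
    Continuous fun u : sphere (0 : EuclideanSpace ℝ (Fin n)) 1 => K.ρ u :=
  K.cont.domRestrict

lemma ρ_pos_sphere (K : StarBody n) (u : sphere (0 : EuclideanSpace ℝ (Fin n)) 1) :
    0 < K.ρ u :=
  K.pos u (norm_eq_of_mem_sphere u)

lemma integral_ρ_pow_pos (hn : n ≠ 0) (K : StarBody n) :
    0 < ∫ u : sphere (0 : EuclideanSpace ℝ (Fin n)) 1, K.ρ u ^ n ∂sphereMeasure n :=
  integral_pos_of_continuous_of_pos (sphereMeasure_ne_zero hn) (K.continuous_ρ_sphere.pow n)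
    fun u => pow_pos (K.ρ_pos_sphere u) n

lemma vol_pos (hn : n ≠ 0) (K : StarBody n) : 0 < K.vol :=
  mul_pos (by positivity) (K.integral_ρ_pow_pos hn)

def dualOrliczMixedVolume (φ : ℝ → ℝ) (M B : StarBody n) : ℝ :=
  (1 / (n : ℝ)) * ∫ u : sphere (0 : EuclideanSpace ℝ (Fin n)) 1,
    M.ρ u ^ n * φ (M.ρ u / B.ρ u) ∂sphereMeasure n

variable {φ : ℝ → ℝ}

lemma apply_div_eq_apply_pow_rpow (hn : n ≠ 0) (M B : StarBody n)
    (u : sphere (0 : EuclideanSpace ℝ (Fin n)) 1) :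
    φ (M.ρ u / B.ρ u) = φ (((B.ρ u / M.ρ u) ^ n) ^ (-(1 : ℝ) / n)) := by
  rw [Real.pow_rpow_neg_one_div_natCast (div_pos (B.ρ_pos_sphere u) (M.ρ_pos_sphere u)).le hn,
    inv_div]

lemma continuous_comp_div (hn : n ≠ 0)
    (hF : ConvexOn ℝ (Ioi 0) fun t : ℝ => φ (t ^ (-(1 : ℝ) / n))) (M B : StarBody n) :
    Continuous fun u : sphere (0 : EuclideanSpace ℝ (Fin n)) 1 => φ (M.ρ u / B.ρ u) := by
  simp only [apply_div_eq_apply_pow_rpow hn M B]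
  exact (hF.continuousOn isOpen_Ioi).comp_continuous
    ((B.continuous_ρ_sphere.div M.continuous_ρ_sphere fun u => (M.ρ_pos_sphere u).ne').pow n)
    fun u => pow_pos (div_pos (B.ρ_pos_sphere u) (M.ρ_pos_sphere u)) n

lemma integrable_pow_mul_comp_div (hn : n ≠ 0)
    (hF : ConvexOn ℝ (Ioi 0) fun t : ℝ => φ (t ^ (-(1 : ℝ) / n))) (M B : StarBody n) :
    Integrable (fun u : sphere (0 : EuclideanSpace ℝ (Fin n)) 1 =>
      M.ρ u ^ n * φ (M.ρ u / B.ρ u)) (sphereMeasure n) :=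
  ((M.continuous_ρ_sphere.pow n).mul (continuous_comp_div hn hF M B)).integrable_of_compactSpace

theorem vol_mul_le_dualOrliczMixedVolume (hn : n ≠ 0)
    (hF : ConvexOn ℝ (Ioi 0) fun t : ℝ => φ (t ^ (-(1 : ℝ) / n))) (M B : StarBody n) :
    M.vol * φ ((M.vol / B.vol) ^ ((1 : ℝ) / n)) ≤ dualOrliczMixedVolume φ M B := by
  set σ := sphereMeasure n
  set IM := ∫ u, M.ρ u ^ n ∂σ
  set IB := ∫ u, B.ρ u ^ n ∂σ
  have hIM : 0 < IM := M.integral_ρ_pow_pos hn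
  have hIB : 0 < IB := B.integral_ρ_pow_pos hn
  have hjensen := hF.map_weighted_integral_le (w := fun u => M.ρ u ^ n)
    (f := fun u => (B.ρ u / M.ρ u) ^ n) isOpen_Ioi (sphereMeasure_ne_zero hn)
    (M.continuous_ρ_sphere.pow n) (fun u => pow_pos (M.ρ_pos_sphere u) n)
    ((B.continuous_ρ_sphere.div M.continuous_ρ_sphere fun u => (M.ρ_pos_sphere u).ne').pow n)
    fun u => pow_pos (div_pos (B.ρ_pos_sphere u) (M.ρ_pos_sphere u)) n
  have hweight : ∀ u : sphere (0 : EuclideanSpace ℝ (Fin n)) 1,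
      M.ρ u ^ n * (B.ρ u / M.ρ u) ^ n = B.ρ u ^ n := fun u => by
    rw [div_pow, mul_div_cancel₀ _ (pow_ne_zero n (M.ρ_pos_sphere u).ne')]
  simp only [hweight, ← apply_div_eq_apply_pow_rpow hn M B] at hjensen
  have hratio : (M.vol / B.vol) ^ ((1 : ℝ) / n) = (IB / IM) ^ (-(1 : ℝ) / n) := by
    rw [vol, vol, mul_div_mul_left _ _ (by positivity), neg_div, Real.rpow_neg (by positivity),
      ← Real.inv_rpow (by positivity), inv_div]
  rw [hratio, dualOrliczMixedVolume, vol, mul_assoc]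
  gcongr
  rwa [le_div_iff₀' hIM] at hjensen

theorem add_dualOrliczMixedVolume_eq_vol (hn : n ≠ 0) {φ₁ φ₂ : ℝ → ℝ}
    (hF₁ : ConvexOn ℝ (Ioi 0) fun t : ℝ => φ₁ (t ^ (-(1 : ℝ) / n)))
    (hF₂ : ConvexOn ℝ (Ioi 0) fun t : ℝ => φ₂ (t ^ (-(1 : ℝ) / n))) {α β : ℝ} {K L M : StarBody n}
    (hM : ∀ u : EuclideanSpace ℝ (Fin n), ‖u‖ = 1 →
      α * φ₁ (M.ρ u / K.ρ u) + β * φ₂ (M.ρ u / L.ρ u) = 1) :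
    α * dualOrliczMixedVolume φ₁ M K + β * dualOrliczMixedVolume φ₂ M L = M.vol := by
  rw [dualOrliczMixedVolume, dualOrliczMixedVolume, vol, mul_left_comm α, mul_left_comm β,
    ← mul_add, ← integral_const_mul, ← integral_const_mul,
    ← integral_add ((integrable_pow_mul_comp_div hn hF₁ M K).const_mul α)
      ((integrable_pow_mul_comp_div hn hF₂ M L).const_mul β)]
  congr 1
  refine integral_congr_ae (.of_forall fun u => ?_)
  linear_combination M.ρ u ^ n * hM u (norm_eq_of_mem_sphere u)

end StarBody

theorem dual_orlicz_brunn_minkowski_linear_general {n : ℕ} (hn : 0 < n)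
    (φ₁ φ₂ : ℝ → ℝ)
    (α β : ℝ) (hα : 0 < α) (hβ : 0 < β)
    (hF₁ : ConvexOn ℝ (Set.Ioi 0) (fun t : ℝ => φ₁ (t ^ (-(1 : ℝ) / n))))
    (hF₂ : ConvexOn ℝ (Set.Ioi 0) (fun t : ℝ => φ₂ (t ^ (-(1 : ℝ) / n))))
    (K L M : StarBody n)
    (hM : ∀ u : EuclideanSpace ℝ (Fin n), ‖u‖ = 1 →
      α * φ₁ (M.ρ u / K.ρ u) + β * φ₂ (M.ρ u / L.ρ u) = 1) :
    α * φ₁ ((M.vol / K.vol) ^ ((1 : ℝ) / n)) +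
      β * φ₂ ((M.vol / L.vol) ^ ((1 : ℝ) / n)) ≤ 1 := by
  have hK := M.vol_mul_le_dualOrliczMixedVolume hn.ne' hF₁ K
  have hL := M.vol_mul_le_dualOrliczMixedVolume hn.ne' hF₂ L
  refine le_of_mul_le_mul_left ?_ (M.vol_pos hn.ne')
  calc M.vol * (α * φ₁ ((M.vol / K.vol) ^ ((1 : ℝ) / n)) +
        β * φ₂ ((M.vol / L.vol) ^ ((1 : ℝ) / n)))
      = α * (M.vol * φ₁ ((M.vol / K.vol) ^ ((1 : ℝ) / n))) +
        β * (M.vol * φ₂ ((M.vol / L.vol) ^ ((1 : ℝ) / n))) := by ring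
    _ ≤ α * M.dualOrliczMixedVolume φ₁ K + β * M.dualOrliczMixedVolume φ₂ L := by gcongr
    _ = M.vol * 1 := by rw [StarBody.add_dualOrliczMixedVolume_eq_vol hn.ne' hF₁ hF₂ hM, mul_one]

/-- Dual Orlicz-Brunn-Minkowski inequality for the linear Orlicz radial addition. -/
theorem dual_orlicz_brunn_minkowski_linear {n : ℕ} (hn : 0 < n)
    (φ₁ φ₂ : ℝ → ℝ) (hφ₁ : IsPhi1 φ₁) (hφ₂ : IsPhi1 φ₂)
    (α β : ℝ) (hα : 0 < α) (hβ : 0 < β) (hαβ : 1 ≤ α + β)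
    (hF₁ : ConvexOn ℝ (Set.Ioi 0) (fun t : ℝ => φ₁ (t ^ (-(1 : ℝ) / n))))
    (hF₂ : ConvexOn ℝ (Set.Ioi 0) (fun t : ℝ => φ₂ (t ^ (-(1 : ℝ) / n))))
    (K L M : StarBody n)
    (hM : ∀ u : EuclideanSpace ℝ (Fin n), ‖u‖ = 1 →
      α * φ₁ (M.ρ u / K.ρ u) + β * φ₂ (M.ρ u / L.ρ u) = 1) :
    α * φ₁ ((M.vol / K.vol) ^ ((1 : ℝ) / n)) +
      β * φ₂ ((M.vol / L.vol) ^ ((1 : ℝ) / n)) ≤ 1 :=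
  dual_orlicz_brunn_minkowski_linear_general hn φ₁ φ₂ α β hα hβ hF₁ hF₂ K L M hM
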